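/- Let A be an n×n real upper-triangular matrix all of whose diagonal entries are equal to λ with λ > 1, let R be a positive integer with λ < 2^R, and let Ω ≥ 0. Then there exist positive reals Δ_1, …, Δ_n and a function g : ℝⁿ → ℝⁿ, each of whose n coordinate functions takes at most 2^R distinct values, such that for every disturbance sequence w : ℕ → ℝⁿ with |w_t(i)| ≤ Ω/2 for all t and all i, the closed-loop trajectory defined by x_0 = 0 and x_{t+1} = A·x_t + g(x_t) + w_t satisfies |x_t(i)| ≤ Δ_i/2 for all t ∈ ℕ and all coordinates i. -/

import Mathlib

/-!
Each coordinate is steered by a uniform quantizer with `2 ^ R` cells applied to the predicted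
state `(A x)_i`, so the next state is the quantization error plus the disturbance. While
`|x_j| ≤ Δ_j / 2` for all `j`, we have `|(A x)_i| ≤ ∑ j, |a_ij| Δ_j / 2`, so the windows are
invariant as soon as `∑ j, |a_ij| Δ_j / 2 ^ R + Ω ≤ Δ_i`. Because `A` is upper triangular
with diagonal `λ < 2 ^ R`, such `Δ > 0` exist: with `Δ_i = K B ^ (n - 1 - i)` and `B` large, the
coupling to the later coordinates costs at most half of the slack `(1 - λ / 2 ^ R) Δ_i`.
-/

open Finset Matrix

/-- Clamping to `N - 1` puts `x = M` into the last of the `N` cells of `[-M, M]`. -/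
noncomputable def cellIndex (M : ℝ) (N : ℕ) (x : ℝ) : ℕ :=
  min ⌊(x + M) * N / (2 * M)⌋₊ (N - 1)

noncomputable def cellCenter (M : ℝ) (N : ℕ) (k : ℕ) : ℝ :=
  -M + (2 * k + 1) * M / N

lemma cellIndex_lt {N : ℕ} (hN : 0 < N) (M x : ℝ) : cellIndex M N x < N :=
  (min_le_right _ _).trans_lt (Nat.sub_lt hN one_pos)

lemma abs_sub_cellCenter_cellIndex_le {M x : ℝ} {N : ℕ} (hM : 0 < M) (hN : 0 < N)
    (hx : |x| ≤ M) : |x - cellCenter M N (cellIndex M N x)| ≤ M / N := by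
  obtain ⟨hxl, hxu⟩ := abs_le.mp hx
  have hNpos : (0 : ℝ) < N := by exact_mod_cast hN
  set t := (x + M) * N / (2 * M) with ht
  have ht0 : 0 ≤ t := div_nonneg (mul_nonneg (by linarith) hNpos.le) (by linarith)
  have htN : t ≤ N := by rw [div_le_iff₀ (by positivity)]; nlinarith
  have hk : cellIndex M N x = min ⌊t⌋₊ (N - 1) := rfl
  have hk_le : (cellIndex M N x : ℝ) ≤ t :=
    (Nat.cast_le.mpr (hk ▸ min_le_left _ _)).trans (Nat.floor_le ht0)
  have hk_ge : t ≤ cellIndex M N x + 1 := by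
    rcases le_total ⌊t⌋₊ (N - 1) with h | h
    · rw [hk, min_eq_left h]; exact (Nat.lt_floor_add_one t).le
    · rw [hk, min_eq_right h, Nat.cast_pred hN]; linarith
  have hdiff : x - cellCenter M N (cellIndex M N x)
      = (2 * t - 2 * cellIndex M N x - 1) * (M / N) := by
    rw [ht, cellCenter]; field_simp; ring
  rw [hdiff, abs_mul, abs_of_pos (div_pos hM hNpos)]
  exact mul_le_of_le_one_left (div_pos hM hNpos).le (abs_le.mpr ⟨by linarith, by linarith⟩)

lemma exists_quantizer {M : ℝ} {N : ℕ} (hM : 0 ≤ M) (hN : 0 < N) :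
    ∃ q : ℝ → ℝ, ∃ s : Finset ℝ, #s ≤ N ∧ (∀ x, q x ∈ s) ∧
      ∀ x, |x| ≤ M → |x - q x| ≤ M / N := by
  rcases hM.eq_or_lt with rfl | hM
  · exact ⟨fun _ => 0, {0}, (card_singleton _).trans_le hN, by simp, fun x hx => by simp_all⟩
  · exact ⟨fun x => cellCenter M N (cellIndex M N x), (range N).image (cellCenter M N),
      card_image_le.trans (card_range N).le,
      fun x => mem_image_of_mem _ (mem_range.mpr (cellIndex_lt hN M x)),
      fun x hx => abs_sub_cellCenter_cellIndex_le hM hN hx⟩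

lemma abs_mulVec_apply_le {m n : Type*} [Fintype n] (A : Matrix m n ℝ) {x y : n → ℝ}
    (h : ∀ j, |x j| ≤ y j) (i : m) : |(A *ᵥ x) i| ≤ ∑ j, |A i j| * y j :=
  calc |(A *ᵥ x) i| ≤ ∑ j, |A i j * x j| := abs_sum_le_sum_abs _ _
    _ ≤ ∑ j, |A i j| * y j := sum_le_sum fun j _ => by
      rw [abs_mul]; exact mul_le_mul_of_nonneg_left (h j) (abs_nonneg _)

lemma exists_pos_mulVec_add_le {n : ℕ} {c : Matrix (Fin n) (Fin n) ℝ} {ρ b : ℝ}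
    (hc : ∀ i j, 0 ≤ c i j) (hupper : c.BlockTriangular id) (hdiag : ∀ i, c i i ≤ ρ)
    (hρ : ρ < 1) (hb : 0 ≤ b) :
    ∃ Δ : Fin n → ℝ, (∀ i, 0 < Δ i) ∧ ∀ i, (c *ᵥ Δ) i + b ≤ Δ i := by
  set C := ∑ i, ∑ j, c i j
  have hrow : ∀ i, ∑ j ∈ univ.erase i, c i j ≤ C := fun i =>
    (sum_le_sum_of_subset_of_nonneg (erase_subset _ _) fun j _ _ => hc i j).trans
      (single_le_sum (fun i _ => sum_nonneg fun j _ => hc i j) (mem_univ i))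
  have hC : 0 ≤ C := sum_nonneg fun i _ => sum_nonneg fun j _ => hc i j
  have hρ' : 0 < 1 - ρ := by linarith
  have hslack : ∀ x, 0 ≤ x → x ≤ (1 - ρ) / 2 * (1 + 2 * x / (1 - ρ)) := fun x hx => by
    have : (1 - ρ) / 2 * (1 + 2 * x / (1 - ρ)) = (1 - ρ) / 2 + x := by field_simp
    linarith
  set B := 1 + 2 * C / (1 - ρ)
  set K := 1 + 2 * b / (1 - ρ)
  have hB : 1 ≤ B := le_add_of_nonneg_right (by positivity)
  have hK : 0 < K := by positivity
  set Δ : Fin n → ℝ := fun i => K * B ^ (n - 1 - i)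
  have hΔ : ∀ i, K ≤ Δ i := fun i => le_mul_of_one_le_right hK.le (one_le_pow₀ hB)
  have hdecay : ∀ i j, i < j → B * Δ j ≤ Δ i := fun i j hij =>
    calc B * Δ j = K * B ^ (n - 1 - j + 1) := by ring
      _ ≤ K * B ^ (n - 1 - i) := by
        gcongr
        have := j.isLt; rw [Fin.lt_def] at hij; omega
  refine ⟨Δ, fun i => hK.trans_le (hΔ i), fun i => ?_⟩
  have hΔi : 0 < Δ i := hK.trans_le (hΔ i)
  have hoff : B * ∑ j ∈ univ.erase i, c i j * Δ j ≤ B * ((1 - ρ) / 2 * Δ i) :=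
    calc B * ∑ j ∈ univ.erase i, c i j * Δ j = ∑ j ∈ univ.erase i, c i j * (B * Δ j) := by
          rw [mul_sum]; exact sum_congr rfl fun j _ => by ring
      _ ≤ ∑ j ∈ univ.erase i, c i j * Δ i := sum_le_sum fun j hj => by
          rcases lt_or_gt_of_ne (ne_of_mem_erase hj) with h | h
          · simp [hupper h]
          · exact mul_le_mul_of_nonneg_left (hdecay i j h) (hc i j)
      _ ≤ C * Δ i := by rw [← sum_mul]; exact mul_le_mul_of_nonneg_right (hrow i) hΔi.le
      _ ≤ B * ((1 - ρ) / 2 * Δ i) := by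
          linarith [mul_le_mul_of_nonneg_right (hslack C hC) hΔi.le]
  have hdiag' : c i i * Δ i ≤ ρ * Δ i := mul_le_mul_of_nonneg_right (hdiag i) hΔi.le
  have hb' : b ≤ (1 - ρ) / 2 * Δ i := (hslack b hb).trans (by gcongr; exact hΔ i)
  rw [mulVec, dotProduct, ← add_sum_erase _ _ (mem_univ i)]
  linarith [le_of_mul_le_mul_left hoff (by positivity)]

theorem jordan_block_noiseless_stabilization (n : ℕ) (lam : ℝ) (hlam : 1 < lam)
    (A : Matrix (Fin n) (Fin n) ℝ)
    (hupper : ∀ i j : Fin n, j < i → A i j = 0)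
    (hdiag : ∀ i : Fin n, A i i = lam)
    (R : ℕ) (hlt : lam < 2 ^ R) (Ω : ℝ) (hΩ : 0 ≤ Ω) :
    ∃ Δ : Fin n → ℝ, (∀ i, 0 < Δ i) ∧
      ∃ g : (Fin n → ℝ) → (Fin n → ℝ),
        (∀ i : Fin n, ∃ s : Finset ℝ, s.card ≤ 2 ^ R ∧ ∀ x, g x i ∈ s) ∧
        ∀ w : ℕ → (Fin n → ℝ), (∀ t i, |w t i| ≤ Ω / 2) →
          ∀ x : ℕ → (Fin n → ℝ), x 0 = 0 →
            (∀ t, x (t + 1) = A.mulVec (x t) + g (x t) + w t) →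
            ∀ t i, |x t i| ≤ Δ i / 2 := by
  set c : Matrix (Fin n) (Fin n) ℝ := of fun i j => |A i j| / 2 ^ R
  obtain ⟨Δ, hΔpos, hΔ⟩ := exists_pos_mulVec_add_le (c := c)
    (fun i j => div_nonneg (abs_nonneg _) (by positivity)) (fun i j h => by simp [c, hupper i j h])
    (fun i => by simp [c, hdiag, abs_of_pos (by linarith : 0 < lam)])
    ((div_lt_one (by positivity)).mpr hlt) hΩ
  choose q s hs hqs hq using fun i =>
    exists_quantizer (M := ∑ j, |A i j| * (Δ j / 2))
      (sum_nonneg fun j _ => mul_nonneg (abs_nonneg _) (half_pos (hΔpos j)).le)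
      (Nat.two_pow_pos R)
  refine ⟨Δ, hΔpos, fun x i => -q i ((A *ᵥ x) i), fun i => ⟨(s i).image Neg.neg,
    card_image_le.trans (hs i), fun x => mem_image_of_mem _ (hqs i _)⟩, ?_⟩
  intro w hw x hx0 hx t
  induction t with
  | zero => simpa [hx0] using fun i => (half_pos (hΔpos i)).le
  | succ t ih =>
    intro i
    have hq := hq i _ (abs_mulVec_apply_le A ih i)
    calc |x (t + 1) i| ≤ |(A *ᵥ x t) i - q i ((A *ᵥ x t) i)| + |w t i| := by
          rw [hx t, Pi.add_apply, Pi.add_apply, ← sub_eq_add_neg]; exact abs_add_le _ _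
      _ ≤ (∑ j, |A i j| * (Δ j / 2)) / (2 ^ R : ℕ) + Ω / 2 := add_le_add hq (hw t i)
      _ = ((c *ᵥ Δ) i + Ω) / 2 := by
          simp only [c, mulVec, dotProduct, of_apply, sum_div, add_div]; push_cast
          exact congrArg (· + Ω / 2) (sum_congr rfl fun j _ => by ring)
      _ ≤ Δ i / 2 := by linarith [hΔ i]
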